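/- The set exp(D̄(0,ε)) = {e^z : |z| ≤ ε} is a convex subset of ℂ for every 0 < ε < 1. -/

import Mathlib

/-!
Along a segment `t ↦ lineMap A B t` in the slit plane, `F = log ∘ lineMap A B` satisfies
`F'' = -F'²`, so `φ = ‖F‖²` has `φ'' = 2‖F'‖² - 2⟪F, F'²⟫ ≥ 2‖F'‖² (1 - ‖F‖)`. Hence `φ` is convex
as soon as `‖log‖ ≤ 1` on the segment, and then `‖log‖` on the segment is bounded by its values
at the endpoints.

For `‖a‖, ‖b‖ ≤ ε < 1` we run a continuity argument over the segments `[exp (τa), exp (τb)]`,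
`τ ∈ [0, 1]`, which shrink to the point `1` at `τ = 0`. The set of `τ` for which `‖log‖ ≤ τε` on
the whole segment is closed and contains `0`; for such `τ < 1` we have `‖log‖ < 1` on the segment,
so by compactness also on the segments for nearby `τ'`, where the convexity bound gives
`‖log‖ ≤ max ‖τ'a‖ ‖τ'b‖ ≤ τ'ε`. At `τ = 1`, every `w ∈ [exp a, exp b]` is `exp (log w)` with
`‖log w‖ ≤ ε`.
-/

open Set Topology AffineMap
open scoped RealInnerProductSpace Real

theorem convexOn_norm_sq_of_hasDerivAt {E : Type*} [NormedAddCommGroup E]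
    [InnerProductSpace ℝ E] {D : Set ℝ} (hD : Convex ℝ D) {f f' f'' : ℝ → E}
    (hf : ∀ x ∈ D, HasDerivAt f (f' x) x) (hf' : ∀ x ∈ D, HasDerivAt f' (f'' x) x)
    (hf'' : ∀ x ∈ D, 0 ≤ ‖f' x‖ ^ 2 + ⟪f x, f'' x⟫) :
    ConvexOn ℝ D (‖f ·‖ ^ 2) := by
  refine convexOn_of_hasDerivWithinAt2_nonneg hD (f' := fun x => 2 * ⟪f x, f' x⟫)
    (f'' := fun x => 2 * (‖f' x‖ ^ 2 + ⟪f x, f'' x⟫)) ?_ ?_ ?_ ?_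
  · exact fun x hx => ((hf x hx).continuousAt.norm.pow 2).continuousWithinAt
  · exact fun x hx => (hf x (interior_subset hx)).norm_sq.hasDerivWithinAt
  · intro x hx
    have h := ((hf x (interior_subset hx)).inner ℝ (hf' x (interior_subset hx))).const_mul 2
    refine (h.congr_deriv ?_).hasDerivWithinAt
    rw [real_inner_self_eq_norm_sq]
    ring
  · exact fun x hx => mul_nonneg zero_le_two (hf'' x (interior_subset hx))

namespace Complex

theorem convexOn_norm_log_lineMap_sq {A B : ℂ}
    (hslit : ∀ t ∈ Icc (0 : ℝ) 1, lineMap A B t ∈ slitPlane)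
    (hle : ∀ t ∈ Icc (0 : ℝ) 1, ‖log (lineMap A B t)‖ ≤ 1) :
    ConvexOn ℝ (Icc 0 1) (fun t : ℝ => ‖log (lineMap A B t)‖ ^ 2) := by
  have hγ : ∀ t : ℝ, HasDerivAt (fun s : ℝ => (lineMap A B s : ℂ)) (B - A) t :=
    fun t => hasDerivAt_lineMap
  refine convexOn_norm_sq_of_hasDerivAt (convex_Icc 0 1)
    (f' := fun t => (B - A) / lineMap A B t) (f'' := fun t => -((B - A) / lineMap A B t) ^ 2)
    (fun t ht => (hγ t).clog_real (hslit t ht)) (fun t ht => ?_) (fun t ht => ?_)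
  · refine ((hasDerivAt_const t (B - A)).fun_div (hγ t)
      (slitPlane_ne_zero (hslit t ht))).congr_deriv ?_
    ring
  · set G := (B - A) / lineMap A B t
    -- `⟪log, -G²⟫ ≥ -‖log‖ ‖G‖² ≥ -‖G‖²`
    have hCS := neg_le_of_abs_le (abs_real_inner_le_norm (log (lineMap A B t)) (-G ^ 2))
    rw [norm_neg, norm_pow] at hCS
    nlinarith [hle t ht, sq_nonneg ‖G‖, norm_nonneg (log (lineMap A B t))]

theorem norm_log_lineMap_le_max {A B : ℂ}
    (hslit : ∀ t ∈ Icc (0 : ℝ) 1, lineMap A B t ∈ slitPlane)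
    (hle : ∀ t ∈ Icc (0 : ℝ) 1, ‖log (lineMap A B t)‖ ≤ 1) {t : ℝ} (ht : t ∈ Icc 0 1) :
    ‖log (lineMap A B t)‖ ≤ max ‖log A‖ ‖log B‖ := by
  have h := (convexOn_norm_log_lineMap_sq hslit hle).le_on_segment
    (left_mem_Icc.2 zero_le_one) (right_mem_Icc.2 zero_le_one)
    (by rwa [segment_eq_Icc zero_le_one])
  simp only [lineMap_apply_zero, lineMap_apply_one] at h
  rw [le_max_iff] at h ⊢
  exact h.imp (pow_le_pow_iff_left₀ (norm_nonneg _) (norm_nonneg _) two_ne_zero).1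
    (pow_le_pow_iff_left₀ (norm_nonneg _) (norm_nonneg _) two_ne_zero).1

theorem re_exp_pos_of_norm_lt {z : ℂ} (hz : ‖z‖ < π / 2) : 0 < (exp z).re := by
  rw [exp_re]
  exact mul_pos (Real.exp_pos _)
    (Real.cos_pos_of_mem_Ioo (abs_lt.1 ((abs_im_le_norm z).trans_lt hz)))

theorem log_exp_of_norm_lt {z : ℂ} (hz : ‖z‖ < π) : log (exp z) = z := by
  obtain ⟨h₁, h₂⟩ := abs_lt.1 ((abs_im_le_norm z).trans_lt hz)
  exact log_exp h₁ h₂.le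

theorem lineMap_exp_mem_slitPlane {a b : ℂ} (ha : ‖a‖ < π / 2) (hb : ‖b‖ < π / 2) {t : ℝ}
    (ht : t ∈ Icc 0 1) : lineMap (exp a) (exp b) t ∈ slitPlane :=
  Or.inl <| (convex_halfSpace_re_gt 0).lineMap_mem (re_exp_pos_of_norm_lt ha)
    (re_exp_pos_of_norm_lt hb) ht

theorem norm_log_lineMap_exp_le_max {a b : ℂ} (ha : ‖a‖ < π / 2) (hb : ‖b‖ < π / 2)
    (hle : ∀ t ∈ Icc (0 : ℝ) 1, ‖log (lineMap (exp a) (exp b) t)‖ ≤ 1) {t : ℝ}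
    (ht : t ∈ Icc 0 1) : ‖log (lineMap (exp a) (exp b) t)‖ ≤ max ‖a‖ ‖b‖ := by
  have hπ : π / 2 < π := by linarith [Real.pi_pos]
  simpa only [log_exp_of_norm_lt (ha.trans hπ), log_exp_of_norm_lt (hb.trans hπ)] using
    norm_log_lineMap_le_max (fun t ht => lineMap_exp_mem_slitPlane ha hb ht) hle ht

theorem continuousAt_norm_log_lineMap_exp_mul {a b : ℂ} {τ t : ℝ} (ha : ‖(τ : ℂ) * a‖ < π / 2)
    (hb : ‖(τ : ℂ) * b‖ < π / 2) (ht : t ∈ Icc 0 1) :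
    ContinuousAt (fun p : ℝ × ℝ => ‖log (lineMap (exp (p.1 * a)) (exp (p.1 * b)) p.2)‖) (τ, t) := by
  have hγ : ContinuousAt (fun p : ℝ × ℝ => lineMap (exp (p.1 * a)) (exp (p.1 * b)) p.2) (τ, t) := by
    simp only [lineMap_apply_module]
    fun_prop
  exact ((continuousAt_clog (lineMap_exp_mem_slitPlane ha hb ht)).comp_of_eq hγ rfl).norm

theorem norm_log_lineMap_exp_le {ε : ℝ} (hε : ε < 1) {a b : ℂ} (ha : ‖a‖ ≤ ε) (hb : ‖b‖ ≤ ε)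
    {t : ℝ} (ht : t ∈ Icc 0 1) : ‖log (lineMap (exp a) (exp b) t)‖ ≤ ε := by
  set Ψ : ℝ × ℝ → ℝ := fun p => ‖log (lineMap (exp (p.1 * a)) (exp (p.1 * b)) p.2)‖
  have hε₀ : 0 ≤ ε := (norm_nonneg a).trans ha
  have hnorm : ∀ τ ∈ Icc (0 : ℝ) 1, ∀ z : ℂ, ‖z‖ ≤ ε →
      ‖(τ : ℂ) * z‖ ≤ τ * ε ∧ ‖(τ : ℂ) * z‖ < π / 2 := by
    intro τ hτ z hz
    have h : ‖(τ : ℂ) * z‖ ≤ τ * ε := by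
      rw [norm_mul, norm_real, Real.norm_of_nonneg hτ.1]
      exact mul_le_mul_of_nonneg_left hz hτ.1
    refine ⟨h, h.trans_lt ?_⟩
    nlinarith [Real.pi_gt_three, hτ.2]
  have hcont : ∀ τ ∈ Icc (0 : ℝ) 1, ∀ t ∈ Icc (0 : ℝ) 1, ContinuousAt Ψ (τ, t) :=
    fun τ hτ t ht =>
      continuousAt_norm_log_lineMap_exp_mul (hnorm τ hτ a ha).2 (hnorm τ hτ b hb).2 ht
  set S := {τ : ℝ | ∀ t ∈ Icc (0 : ℝ) 1, Ψ (τ, t) ≤ τ * ε}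
  have hS : Icc 0 1 ⊆ S := by
    refine IsClosed.Icc_subset_of_forall_mem_nhdsWithin ?_ ?_ ?_
    · refine isClosed_of_closure_subset fun τ hτ => ?_
      have hI : closure (S ∩ Icc 0 1) ⊆ Icc 0 1 :=
        closure_minimal inter_subset_right isClosed_Icc
      refine ⟨fun t ht => le_on_closure (fun σ hσ => hσ.1 t ht) ?_ (by fun_prop) hτ, hI hτ⟩
      exact fun σ hσ => ((hcont σ (hI hσ) t ht).comp (f := fun σ => (σ, t))
        (by fun_prop)).continuousWithinAt
    · intro t ht
      simp [Ψ]
    · rintro τ ⟨hτS, hτI⟩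
      have hlt : ∀ t ∈ Icc (0 : ℝ) 1, Ψ (τ, t) < 1 := fun t ht =>
        (hτS t ht).trans_lt (by nlinarith [hτI.2])
      have hnear : ∀ᶠ σ in 𝓝 τ, ∀ t ∈ Icc (0 : ℝ) 1, Ψ (σ, t) < 1 :=
        isCompact_Icc.eventually_forall_of_forall_eventually fun t ht =>
          (hcont τ (Ico_subset_Icc_self hτI) t ht).eventually (gt_mem_nhds (hlt t ht))
      filter_upwards [nhdsWithin_le_nhds hnear, Ioo_mem_nhdsGT hτI.2] with σ hσ hσI
      have hσI : σ ∈ Icc (0 : ℝ) 1 := ⟨hτI.1.trans hσI.1.le, hσI.2.le⟩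
      intro t ht
      calc Ψ (σ, t) ≤ max ‖(σ : ℂ) * a‖ ‖(σ : ℂ) * b‖ :=
            norm_log_lineMap_exp_le_max (hnorm σ hσI a ha).2 (hnorm σ hσI b hb).2
              (fun t ht => (hσ t ht).le) ht
        _ ≤ σ * ε := max_le (hnorm σ hσI a ha).1 (hnorm σ hσI b hb).1
  simpa [Ψ] using hS (right_mem_Icc.2 zero_le_one) t ht

theorem lineMap_exp_mem_exp_closedBall {ε : ℝ} (hε : ε < 1) {a b : ℂ}
    (ha : a ∈ Metric.closedBall 0 ε) (hb : b ∈ Metric.closedBall 0 ε) {t : ℝ}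
    (ht : t ∈ Icc 0 1) :
    lineMap (exp a) (exp b) t ∈ exp '' Metric.closedBall 0 ε := by
  rw [mem_closedBall_zero_iff] at ha hb
  have hπ : 1 < π / 2 := by linarith [Real.pi_gt_three]
  have hne := slitPlane_ne_zero (lineMap_exp_mem_slitPlane (ha.trans_lt (by linarith))
    (hb.trans_lt (by linarith)) ht)
  exact ⟨log _, mem_closedBall_zero_iff.2 (norm_log_lineMap_exp_le hε ha hb ht), exp_log hne⟩

end Complex

theorem exp_closedBall_convex_general (ε : ℝ) (hε1 : ε < 1) :
    Convex ℝ (Complex.exp '' Metric.closedBall (0 : ℂ) ε) := by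
  refine convex_iff_segment_subset.2 ?_
  rintro _ ⟨a, ha, rfl⟩ _ ⟨b, hb, rfl⟩
  rw [segment_eq_image_lineMap]
  rintro _ ⟨t, ht, rfl⟩
  exact Complex.lineMap_exp_mem_exp_closedBall hε1 ha hb ht

theorem exp_closedBall_convex (ε : ℝ) (hε0 : 0 < ε) (hε1 : ε < 1) :
    Convex ℝ (Complex.exp '' Metric.closedBall (0 : ℂ) ε) :=
  exp_closedBall_convex_general ε hε1
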